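/- arXiv:math/0312061 — 4 statements merged into one kernel-verified Lean document; each statement's English description precedes it below -/
import Mathlib

section
/- Let W be a monotone complete ordered vector space carrying a faithful normal positive linear functional ψ. Then for every nonempty upper-bounded upward-directed subset J of W there exists an increasing sequence (j_n) of elements of J such that sup_n j_n = sup J. -/
/-- An ordered vector space is *monotone complete* if every nonempty
upper-bounded upward-directed subset has a supremum. -/
def MonotoneComplete (W : Type*) [Preorder W] : Prop :=
  ∀ J : Set W, J.Nonempty → DirectedOn (· ≤ ·) J → BddAbove J → ∃ s : W, IsLUB J s

/-- Monotone selection principle: there is an increasing sequence in `J`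
with the same supremum as `J`. -/
theorem stmt1 {W : Type*} [AddCommGroup W] [PartialOrder W] [IsOrderedAddMonoid W] [Module ℝ W]
    (hW : MonotoneComplete W) (ψ : W →ₗ[ℝ] ℝ)
    (hpos : ∀ a : W, 0 ≤ a → 0 ≤ ψ a)
    (hfaith : ∀ a : W, 0 ≤ a → a ≠ 0 → 0 < ψ a)
    (hnormal : ∀ (J : Set W) (s : W), J.Nonempty → DirectedOn (· ≤ ·) J →
      IsLUB J s → IsLUB (ψ '' J) (ψ s))
    (J : Set W) (hJne : J.Nonempty) (hJdir : DirectedOn (· ≤ ·) J)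
    (hJbdd : BddAbove J) (s : W) (hs : IsLUB J s) :
    ∃ j : ℕ → W, Monotone j ∧ (∀ n, j n ∈ J) ∧ IsLUB (Set.range j) s := by
  have hmono : ∀ a b : W, a ≤ b → ψ a ≤ ψ b := by
    intro a b hab
    have h0 : (0:ℝ) ≤ ψ (b - a) := hpos _ (by simpa using sub_nonneg.mpr hab)
    rw [map_sub] at h0
    linarith
  have hψsup : IsLUB (ψ '' J) (ψ s) := hnormal J s hJne hJdir hs
  have key : ∀ (n : ℕ) (x : W), x ∈ J → ∃ y, y ∈ J ∧ x ≤ y ∧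
      ψ s - 1 / (n + 1) < ψ y := by
    intro n x hx
    have hε : (0:ℝ) < 1 / (n + 1) := by positivity
    have hz : ∃ z ∈ J, ψ s - 1 / (n + 1) < ψ z := by
      by_contra h
      push_neg at h
      have hub : ψ s - 1 / (n + 1) ∈ upperBounds (ψ '' J) := by
        rintro _ ⟨z, hzJ, rfl⟩
        exact h z hzJ
      have := hψsup.2 hub
      linarith
    obtain ⟨z, hzJ, hzψ⟩ := hz
    obtain ⟨y, hy, hxy, hzy⟩ := hJdir x hx z hzJ
    exact ⟨y, hy, hxy, lt_of_lt_of_le hzψ (hmono _ _ hzy)⟩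
  obtain ⟨j0, hj0⟩ := hJne
  choose f hfJ hfle hfψ using key
  let j' : ℕ → {x // x ∈ J} := fun n =>
    Nat.rec ⟨j0, hj0⟩ (fun n p => ⟨f n p.1 p.2, hfJ n p.1 p.2⟩) n
  set j : ℕ → W := fun n => (j' n).1 with hj
  have hjJ : ∀ n, j n ∈ J := fun n => (j' n).2
  have hstep : ∀ n, j n ≤ j (n + 1) := fun n => hfle n (j' n).1 (j' n).2
  have hjmono : Monotone j := monotone_nat_of_le_succ hstep
  have hjψ : ∀ n : ℕ, ψ s - 1 / (n + 1) < ψ (j (n + 1)) :=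
    fun n => hfψ n (j' n).1 (j' n).2
  -- the range of j
  have hrne : (Set.range j).Nonempty := ⟨j 0, ⟨0, rfl⟩⟩
  have hrdir : DirectedOn (· ≤ ·) (Set.range j) := by
    rintro _ ⟨m, rfl⟩ _ ⟨n, rfl⟩
    exact ⟨j (max m n), ⟨_, rfl⟩, hjmono (le_max_left m n), hjmono (le_max_right m n)⟩
  have hub_s : s ∈ upperBounds (Set.range j) := by
    rintro _ ⟨n, rfl⟩
    exact hs.1 (hjJ n)
  obtain ⟨t, ht⟩ := hW (Set.range j) hrne hrdir ⟨s, hub_s⟩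
  have hts : t ≤ s := ht.2 hub_s
  have hψt : IsLUB (ψ '' Set.range j) (ψ t) := hnormal _ t hrne hrdir ht
  have hψts : ψ s ≤ ψ t := by
    by_contra h
    push_neg at h
    obtain ⟨n, hn⟩ := exists_nat_one_div_lt (sub_pos.mpr h)
    have h1 : ψ (j (n + 1)) ≤ ψ t := hψt.1 ⟨j (n + 1), ⟨n + 1, rfl⟩, rfl⟩
    have h2 := hjψ n
    have : (1 : ℝ) / (n + 1) = 1 / (↑n + 1) := by push_cast; ring
    rw [this] at hn
    linarith
  have hst : s = t := by
    by_contra hne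
    have h1 : (0:W) ≤ s - t := sub_nonneg.mpr hts
    have h2 : s - t ≠ 0 := fun h => hne (sub_eq_zero.mp h)
    have := hfaith _ h1 h2
    rw [map_sub] at this
    have := hmono t s hts
    linarith [hψts]
  exact ⟨j, hjmono, hjJ, hst ▸ ht⟩
end

section
/- Let W be a monotone complete ordered vector space carrying a faithful normal positive linear functional. Then every monotone sequentially closed vector subspace V of W is monotone closed in W, i.e., V contains the supremum in W of each nonempty upward-directed subset of V that is upper bounded in W. -/
/-- Every monotone sequentially closed subspace of a monotone complete ordered
vector space carrying a faithful normal positive linear functional is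
monotone closed. -/
theorem stmt3 {W : Type*} [AddCommGroup W] [PartialOrder W] [IsOrderedAddMonoid W] [Module ℝ W]
    (hW : MonotoneComplete W) (ψ : W →ₗ[ℝ] ℝ)
    (hpos : ∀ a : W, 0 ≤ a → 0 ≤ ψ a)
    (hfaith : ∀ a : W, 0 ≤ a → a ≠ 0 → 0 < ψ a)
    (hnormal : ∀ (J : Set W) (s : W), J.Nonempty → DirectedOn (· ≤ ·) J →
      IsLUB J s → IsLUB (ψ '' J) (ψ s))
    (V : Submodule ℝ W)
    (hseqclosed : ∀ j : ℕ → W, (∀ n, j n ∈ V) → Monotone j →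
      BddAbove (Set.range j) → ∀ s : W, IsLUB (Set.range j) s → s ∈ V) :
    ∀ J : Set W, J ⊆ (V : Set W) → J.Nonempty → DirectedOn (· ≤ ·) J →
      BddAbove J → ∀ s : W, IsLUB J s → s ∈ V := by
  intro J hJV hne hdir hbdd s hs
  have hlub := hnormal J s hne hdir hs
  have hmono : ∀ a b : W, a ≤ b → ψ a ≤ ψ b := by
    intro a b hab
    have h1 := hpos (b - a) (by simpa using sub_nonneg.mpr hab)
    have h2 : ψ b - ψ a ≥ 0 := by simpa [map_sub] using h1
    linarith
  have hx : ∀ (n : ℕ) (w : W), w ∈ J → ∃ y, y ∈ J ∧ w ≤ y ∧ ψ s - 1/(n+1) < ψ y := by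
    intro n w hw
    have hε : (0:ℝ) < 1/(n+1) := by positivity
    have hexx : ∃ x ∈ J, ψ s - 1/(n+1) < ψ x := by
      by_contra h
      push_neg at h
      have : ψ s ≤ ψ s - 1/(n+1) :=
        hlub.2 (by rintro _ ⟨x, hxJ, rfl⟩; exact h x hxJ)
      linarith
    obtain ⟨x, hxJ, hxψ⟩ := hexx
    obtain ⟨y, hyJ, hwy, hxy⟩ := hdir w hw x hxJ
    exact ⟨y, hyJ, hwy, lt_of_lt_of_le hxψ (hmono _ _ hxy)⟩
  choose f hfJ hfle hfψ using hx
  obtain ⟨w0, hw0⟩ := hne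
  let g : ℕ → {x : W // x ∈ J} := fun n =>
    Nat.rec ⟨f 0 w0 hw0, hfJ 0 w0 hw0⟩
      (fun n gn => ⟨f (n+1) gn.1 gn.2, hfJ (n+1) gn.1 gn.2⟩) n
  let j : ℕ → W := fun n => (g n).1
  have hjJ : ∀ n, j n ∈ J := fun n => (g n).2
  have hstep : ∀ n, j n ≤ j (n+1) := fun n => hfle (n+1) (g n).1 (g n).2
  have hjψ : ∀ n, ψ s - 1/(n+1) < ψ (j n) := by
    intro n
    cases n with
    | zero => exact_mod_cast hfψ 0 w0 hw0
    | succ m => exact_mod_cast hfψ (m+1) (g m).1 (g m).2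
  have hjmono : Monotone j := monotone_nat_of_le_succ hstep
  have hjbdd : BddAbove (Set.range j) :=
    ⟨s, by rintro _ ⟨n, rfl⟩; exact hs.1 (hjJ n)⟩
  obtain ⟨t, ht⟩ := hW (Set.range j) ⟨j 0, ⟨0, rfl⟩⟩
    (hjmono.directed_le.directedOn_range) hjbdd
  have htV : t ∈ V := hseqclosed j (fun n => hJV (hjJ n)) hjmono hjbdd t ht
  have hts : t ≤ s := ht.2 (by rintro _ ⟨n, rfl⟩; exact hs.1 (hjJ n))
  have hψts : ψ s ≤ ψ t := by
    by_contra h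
    push_neg at h
    obtain ⟨n, hn⟩ := exists_nat_one_div_lt (show (0:ℝ) < ψ s - ψ t by linarith)
    have h1 : ψ (j n) ≤ ψ t := hmono _ _ (ht.1 ⟨n, rfl⟩)
    have h2 := hjψ n
    have : (1:ℝ)/(n+1) < ψ s - ψ t := by exact_mod_cast hn
    linarith
  have hst : s = t := by
    by_contra h
    have hne0 : s - t ≠ 0 := fun h0 => h (sub_eq_zero.mp h0)
    have := hfaith (s - t) (sub_nonneg.mpr hts) hne0
    have : ψ s - ψ t > 0 := by simpa [map_sub] using this
    linarith [hmono t s hts]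
  exact hst ▸ htV
end

section
/- Let W₁ and W₂ be monotone complete ordered vector spaces, and suppose W₁ carries a faithful normal positive linear functional. Then every sequentially normal positive linear map φ : W₁ → W₂ is normal, i.e., φ(sup J) = sup_{j∈J} φ(j) for every nonempty upper-bounded upward-directed subset J of W₁. -/
/-- Every sequentially normal positive linear map out of a monotone complete
ordered vector space carrying a faithful normal positive linear functional
is normal. -/
theorem stmt4 {W₁ W₂ : Type*} [AddCommGroup W₁] [PartialOrder W₁] [IsOrderedAddMonoid W₁] [Module ℝ W₁]
    [AddCommGroup W₂] [PartialOrder W₂] [IsOrderedAddMonoid W₂] [Module ℝ W₂]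
    (hW₁ : MonotoneComplete W₁) (hW₂ : MonotoneComplete W₂)
    (ψ : W₁ →ₗ[ℝ] ℝ)
    (hpos : ∀ a : W₁, 0 ≤ a → 0 ≤ ψ a)
    (hfaith : ∀ a : W₁, 0 ≤ a → a ≠ 0 → 0 < ψ a)
    (hnormal : ∀ (J : Set W₁) (s : W₁), J.Nonempty → DirectedOn (· ≤ ·) J →
      IsLUB J s → IsLUB (ψ '' J) (ψ s))
    (φ : W₁ →ₗ[ℝ] W₂)
    (hφpos : ∀ a : W₁, 0 ≤ a → 0 ≤ φ a)
    (hφseq : ∀ j : ℕ → W₁, Monotone j → BddAbove (Set.range j) →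
      ∀ s : W₁, IsLUB (Set.range j) s →
        IsLUB (Set.range fun n => φ (j n)) (φ s)) :
    ∀ (J : Set W₁) (s : W₁), J.Nonempty → DirectedOn (· ≤ ·) J →
      BddAbove J → IsLUB J s → IsLUB (φ '' J) (φ s) := by
  intro J s hJne hJdir hJbdd hlub
  have ψmono : ∀ a b : W₁, a ≤ b → ψ a ≤ ψ b := by
    intro a b hab
    have := hpos (b - a) (by simpa [sub_nonneg] using hab)
    simp only [map_sub, sub_nonneg] at this
    exact this
  have φmono : ∀ a b : W₁, a ≤ b → φ a ≤ φ b := by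
    intro a b hab
    have := hφpos (b - a) (by simpa [sub_nonneg] using hab)
    simp only [map_sub, sub_nonneg] at this
    exact this
  have hψlub : IsLUB (ψ '' J) (ψ s) := hnormal J s hJne hJdir hlub
  -- choose j n ∈ J with ψ s - 1/(n+1) < ψ (j n)
  have hex : ∀ n : ℕ, ∃ a, a ∈ J ∧ ψ s - 1 / (n + 1) < ψ a := by
    intro n
    by_contra h
    push_neg at h
    have hub : ψ s ≤ ψ s - 1 / (n + 1) := by
      apply hψlub.2
      rintro _ ⟨a, ha, rfl⟩
      exact h a ha
    have hpos' : (0 : ℝ) < 1 / (n + 1) := by positivity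
    linarith
  choose j hjJ hjψ using hex
  -- build an increasing sequence k in J with j (n+1) ≤ k (n+1)
  have step : ∀ (n : ℕ) (a : W₁), a ∈ J → ∃ c, c ∈ J ∧ a ≤ c ∧ j (n + 1) ≤ c := by
    intro n a ha
    obtain ⟨c, hc, h1, h2⟩ := hJdir a ha (j (n + 1)) (hjJ (n + 1))
    exact ⟨c, hc, h1, h2⟩
  let k : ℕ → {x : W₁ // x ∈ J} := fun n =>
    Nat.rec ⟨j 0, hjJ 0⟩
      (fun n p => ⟨(step n p.1 p.2).choose, (step n p.1 p.2).choose_spec.1⟩) n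
  have hk_succ : ∀ n : ℕ, (k n).1 ≤ (k (n + 1)).1 ∧ j (n + 1) ≤ (k (n + 1)).1 := by
    intro n
    exact ⟨(step n (k n).1 (k n).2).choose_spec.2.1,
      (step n (k n).1 (k n).2).choose_spec.2.2⟩
  have hkj : ∀ n : ℕ, ψ (j n) ≤ ψ ((k n).1) := by
    intro n
    cases n with
    | zero => exact le_refl _
    | succ m => exact ψmono _ _ (hk_succ m).2
  have kmono : Monotone fun n => (k n).1 := monotone_nat_of_le_succ fun n => (hk_succ n).1
  have hkJ : ∀ n, (k n).1 ∈ J := fun n => (k n).2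
  have hks : ∀ n, (k n).1 ≤ s := fun n => hlub.1 (hkJ n)
  have hbdd : BddAbove (Set.range fun n => (k n).1) := by
    refine ⟨s, ?_⟩
    rintro _ ⟨n, rfl⟩
    exact hks n
  have hne : (Set.range fun n => (k n).1).Nonempty := ⟨_, ⟨0, rfl⟩⟩
  have hdir : DirectedOn (· ≤ ·) (Set.range fun n => (k n).1) :=
    (kmono.directed_le).directedOn_range
  obtain ⟨t, ht⟩ := hW₁ _ hne hdir hbdd
  have hts : t ≤ s := ht.2 fun x hx => by
    obtain ⟨n, rfl⟩ := hx
    exact hks n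
  -- ψ t = ψ s
  have hψt : IsLUB (ψ '' Set.range fun n => (k n).1) (ψ t) := hnormal _ t hne hdir ht
  have hψs : IsLUB (ψ '' Set.range fun n => (k n).1) (ψ s) := by
    constructor
    · rintro _ ⟨_, ⟨n, rfl⟩, rfl⟩
      exact ψmono _ _ (hks n)
    · intro b hb
      by_contra hlt
      push_neg at hlt
      obtain ⟨n, hn⟩ := exists_nat_one_div_lt (show (0 : ℝ) < ψ s - b by linarith)
      have h1 : ψ ((k n).1) ≤ b := hb ⟨_, ⟨n, rfl⟩, rfl⟩
      have h2 : ψ s - 1 / (n + 1) < ψ (j n) := hjψ n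
      have h3 := hkj n
      linarith
  have hψst : ψ t = ψ s := hψt.unique hψs
  have hst : s = t := by
    by_contra hne'
    have h0 : (0 : W₁) ≤ s - t := by simpa [sub_nonneg] using hts
    have hne'' : s - t ≠ 0 := fun h => hne' (by rwa [sub_eq_zero] at h)
    have := hfaith (s - t) h0 hne''
    simp only [map_sub] at this
    linarith
  have hL : IsLUB (Set.range fun n => φ ((k n).1)) (φ s) :=
    hφseq _ kmono hbdd s (hst ▸ ht)
  constructor
  · rintro _ ⟨x, hx, rfl⟩
    exact φmono _ _ (hlub.1 hx)
  · intro b hb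
    apply hL.2
    rintro _ ⟨n, rfl⟩
    exact hb ⟨(k n).1, hkJ n, rfl⟩
end

section
/- Let W₁, W₂ be monotone complete ordered vector spaces, ψ a faithful normal positive linear functional on W₁, φ : W₁ → W₂ a sequentially normal positive linear map, and J a nonempty upper-bounded upward-directed subset of W₁. If (j_n) is an increasing sequence in J with sup_n ψ(j_n) = sup_{j∈J} ψ(j), then φ(sup J) = sup_n φ(j_n) = sup_{j∈J} φ(j). -/
/-- For a selected increasing sequence, a sequentially normal positive linear
map sends `sup J` to the common supremum of `φ (j n)` and of `φ '' J`. -/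
theorem stmt11 {W₁ W₂ : Type*} [AddCommGroup W₁] [PartialOrder W₁] [IsOrderedAddMonoid W₁] [Module ℝ W₁]
    [AddCommGroup W₂] [PartialOrder W₂] [IsOrderedAddMonoid W₂] [Module ℝ W₂]
    (hW₁ : MonotoneComplete W₁) (hW₂ : MonotoneComplete W₂)
    (ψ : W₁ →ₗ[ℝ] ℝ)
    (hpos : ∀ a : W₁, 0 ≤ a → 0 ≤ ψ a)
    (hfaith : ∀ a : W₁, 0 ≤ a → a ≠ 0 → 0 < ψ a)
    (hnormal : ∀ (J : Set W₁) (s : W₁), J.Nonempty → DirectedOn (· ≤ ·) J →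
      IsLUB J s → IsLUB (ψ '' J) (ψ s))
    (φ : W₁ →ₗ[ℝ] W₂)
    (hφpos : ∀ a : W₁, 0 ≤ a → 0 ≤ φ a)
    (hφseq : ∀ j : ℕ → W₁, Monotone j → BddAbove (Set.range j) →
      ∀ s : W₁, IsLUB (Set.range j) s →
        IsLUB (Set.range fun n => φ (j n)) (φ s))
    (J : Set W₁) (hJne : J.Nonempty) (hJdir : DirectedOn (· ≤ ·) J)
    (hJbdd : BddAbove J) (s : W₁) (hs : IsLUB J s)
    (j : ℕ → W₁) (hmono : Monotone j) (hmem : ∀ n, j n ∈ J)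
    (hψ : (⨆ n, ψ (j n)) = sSup (ψ '' J)) :
    IsLUB (Set.range fun n => φ (j n)) (φ s) ∧ IsLUB (φ '' J) (φ s) := by

  -- range j is nonempty, directed, bounded above by s
  have hsub : Set.range j ⊆ J := by rintro _ ⟨n, rfl⟩; exact hmem n
  have hne : (Set.range j).Nonempty := ⟨j 0, 0, rfl⟩
  have hdir : DirectedOn (· ≤ ·) (Set.range j) := by
    rintro _ ⟨m, rfl⟩ _ ⟨n, rfl⟩
    exact ⟨j (max m n), ⟨max m n, rfl⟩, hmono (le_max_left m n), hmono (le_max_right m n)⟩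
  have hbdd : BddAbove (Set.range j) := ⟨s, fun x hx => hs.1 (hsub hx)⟩
  obtain ⟨t, ht⟩ := hW₁ _ hne hdir hbdd
  have hts : t ≤ s := ht.2 fun x hx => hs.1 (hsub hx)
  -- ψ t = sup ψ (j n)
  have hψt : IsLUB (ψ '' Set.range j) (ψ t) := hnormal _ _ hne hdir ht
  have hψs : IsLUB (ψ '' J) (ψ s) := hnormal _ _ hJne hJdir hs
  have him : ψ '' Set.range j = Set.range fun n => ψ (j n) := by
    ext x; simp [Set.mem_image, Set.mem_range]
  have h1 : ψ t = ⨆ n, ψ (j n) := by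
    rw [him] at hψt
    exact (hψt.csSup_eq (Set.range_nonempty _)).symm
  have h2 : sSup (ψ '' J) = ψ s := hψs.csSup_eq (hJne.image _)
  have heq : ψ t = ψ s := by rw [h1, hψ, h2]
  -- faithfulness gives t = s
  have hst : s = t := by
    by_contra h
    have hne0 : s - t ≠ 0 := fun h0 => h (sub_eq_zero.mp h0)
    have : 0 < ψ (s - t) := hfaith _ (sub_nonneg.mpr hts) hne0
    rw [map_sub, heq] at this
    linarith
  subst hst
  have hlub1 : IsLUB (Set.range fun n => φ (j n)) (φ s) := hφseq j hmono hbdd s ht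
  refine ⟨hlub1, ?_, ?_⟩
  · rintro _ ⟨x, hx, rfl⟩
    have : 0 ≤ φ (s - x) := hφpos _ (sub_nonneg.mpr (hs.1 hx))
    rw [map_sub] at this
    exact sub_nonneg.mp this
  · intro u hu
    exact hlub1.2 (by rintro _ ⟨n, rfl⟩; exact hu ⟨j n, hmem n, rfl⟩)
end
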